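/- arXiv:2512.16072 — 3 statements merged into one kernel-verified Lean document; each statement's English description precedes it below -/
import Mathlib

section
/- Let A be an Artin algebra and let 0 → X → P → M → 0 be a short exact sequence of finitely generated left A-modules in which the map X → P is a left add(A)-approximation of X. Then X is reflexive if and only if M is torsionless. -/
universe u

section Dual
variable (R : Type u) [Ring R] (M : Type u) [AddCommGroup M] [Module R M]

/-- The canonical evaluation map `φ_M : M → M** = Hom_{R^op}(Hom_R(M, R), R)`,
sending `m` to `f ↦ f m`. -/
noncomputable def evalDD : M →ₗ[R] ((M →ₗ[R] R) →ₗ[Rᵐᵒᵖ] R) where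
  toFun m :=
    { toFun := fun f => f m
      map_add' := fun f g => rfl
      map_smul' := fun a f => rfl }
  map_add' m m' := by ext f; simp
  map_smul' a m := by ext f; simp

/-- `M` is torsionless if the canonical map `φ_M : M → M**` is injective. -/
def IsTorsionless : Prop := Function.Injective (evalDD R M)

/-- `M` is reflexive if the canonical map `φ_M : M → M**` is bijective. -/
def IsReflexiveModule : Prop := Function.Bijective (evalDD R M)
end Dual

section Approx
variable (R : Type u) [Ring R] (M : Type u) [AddCommGroup M] [Module R M]
variable (P : Type u) [AddCommGroup P] [Module R P]

/-- `f : M → P` is a left `add R`-approximation: `P` is a finitely generated projective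
module (i.e. `P ∈ add R`), and every homomorphism from `M` to a finitely generated
projective module factors through `f`. -/
def IsLeftAddApprox (f : M →ₗ[R] P) : Prop :=
  Module.Finite R P ∧ Module.Projective R P ∧
  ∀ (Q : Type u) (_ : AddCommGroup Q) (_ : Module R Q), Module.Finite R Q →
    Module.Projective R Q → ∀ g : M →ₗ[R] Q, ∃ h : P →ₗ[R] Q, h.comp f = g
end Approx

/-!
By the approximation property `f* : P* → X*` is surjective, so `0 → M* → P* → X* → 0` is exact.
Dualising once more gives a left exact row `0 → X** → P** → M**` lying under `X → P → M → 0`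
via the evaluation maps, and `φ_P` is bijective because `P` is finitely generated projective.
A diagram chase identifies `coker φ_X` with `ker φ_M`, while `φ_X` is injective since `X`
embeds in the torsionless module `P`.
-/

theorem LinearMap.exists_comp_eq_of_surjective_of_ker_le {R M N Q : Type*} [Ring R]
    [AddCommGroup M] [Module R M] [AddCommGroup N] [Module R N] [AddCommGroup Q] [Module R Q]
    (g : M →ₗ[R] N) (hg : Function.Surjective g) (p : M →ₗ[R] Q) (h : ker g ≤ ker p) :
    ∃ q : N →ₗ[R] Q, q ∘ₗ g = p :=
  ⟨(ker g).liftQ p h ∘ₗ (g.quotKerEquivOfSurjective hg).symm.toLinearMap, by ext x; simp⟩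

section Dual

variable {R : Type u} [Ring R]

@[simp] theorem evalDD_apply {M : Type u} [AddCommGroup M] [Module R M] (m : M)
    (φ : M →ₗ[R] R) : evalDD R M m φ = φ m := rfl

theorem IsTorsionless.of_injective {X P : Type u} [AddCommGroup X] [Module R X]
    [AddCommGroup P] [Module R P] (f : X →ₗ[R] P) (hf : Function.Injective f)
    (hP : IsTorsionless R P) : IsTorsionless R X :=
  fun _ _ h => hf (hP (LinearMap.ext fun φ => LinearMap.congr_fun h (φ ∘ₗ f)))

theorem isReflexiveModule_pi (n : ℕ) : IsReflexiveModule R (Fin n → R) := by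
  have hsum (φ : (Fin n → R) →ₗ[R] R) :
      φ = ∑ i, MulOpposite.op (φ fun j => if i = j then 1 else 0) • LinearMap.proj i :=
    LinearMap.ext fun v => by simp [φ.pi_apply_eq_sum_univ v]
  refine ⟨fun v w h => funext fun i => LinearMap.congr_fun h (LinearMap.proj i),
    fun η => ⟨fun i => η (LinearMap.proj i), LinearMap.ext fun φ => ?_⟩⟩
  conv_rhs => rw [hsum φ]
  rw [evalDD_apply, φ.pi_apply_eq_sum_univ, map_sum]
  simp only [map_smul, op_smul_eq_mul, smul_eq_mul]

theorem IsReflexiveModule.of_retract {F P : Type u} [AddCommGroup F] [Module R F]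
    [AddCommGroup P] [Module R P] (π : F →ₗ[R] P) (σ : P →ₗ[R] F) (hπσ : π ∘ₗ σ = .id)
    (hF : IsReflexiveModule R F) : IsReflexiveModule R P := by
  have hσ : Function.Injective σ :=
    Function.LeftInverse.injective fun p => LinearMap.congr_fun hπσ p
  refine ⟨IsTorsionless.of_injective σ hσ hF.1, fun η => ?_⟩
  obtain ⟨v, hv⟩ := hF.2 (η ∘ₗ LinearMap.lcomp Rᵐᵒᵖ R σ)
  refine ⟨π v, LinearMap.ext fun φ => ?_⟩
  simpa [LinearMap.lcomp_apply', LinearMap.comp_assoc, hπσ] using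
    LinearMap.congr_fun hv (φ ∘ₗ π)

theorem isReflexiveModule_of_projective (P : Type u) [AddCommGroup P] [Module R P]
    [Module.Finite R P] [Module.Projective R P] : IsReflexiveModule R P := by
  obtain ⟨n, π, hπ⟩ := Module.Finite.exists_fin' R P
  obtain ⟨σ, hσ⟩ := Module.projective_lifting_property π LinearMap.id hπ
  exact .of_retract π σ hσ (isReflexiveModule_pi n)

end Dual

section ExactSequence

variable {R : Type u} [Ring R] {X P M : Type u} [AddCommGroup X] [Module R X]
  [AddCommGroup P] [Module R P] [AddCommGroup M] [Module R M]
  {f : X →ₗ[R] P} {g : P →ₗ[R] M}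

theorem IsTorsionless.of_isReflexiveModule_of_exact (hfg : Function.Exact f g)
    (hg : Function.Surjective g) (hext : Function.Surjective (LinearMap.lcomp Rᵐᵒᵖ R f))
    (hP : IsTorsionless R P) (hX : IsReflexiveModule R X) : IsTorsionless R M := by
  rw [IsTorsionless, injective_iff_map_eq_zero]
  intro m hm
  obtain ⟨p, rfl⟩ := hg m
  -- `φ_P p` kills every functional vanishing on `X`, so it descends to an element of `X**`.
  have hker : LinearMap.ker (LinearMap.lcomp Rᵐᵒᵖ R f) ≤ LinearMap.ker (evalDD R P p) := by
    intro φ hφ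
    have hφg : LinearMap.ker g ≤ LinearMap.ker φ := fun y hy => by
      obtain ⟨x, rfl⟩ := (hfg y).1 hy
      exact LinearMap.congr_fun hφ x
    obtain ⟨ψ, rfl⟩ := LinearMap.exists_comp_eq_of_surjective_of_ker_le g hg φ hφg
    exact LinearMap.congr_fun hm ψ
  obtain ⟨ξ, hξ⟩ :=
    LinearMap.exists_comp_eq_of_surjective_of_ker_le _ hext (evalDD R P p) hker
  obtain ⟨x, rfl⟩ := hX.2 ξ
  have hfx : f x = p := hP (LinearMap.ext fun φ => LinearMap.congr_fun hξ φ)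
  rw [← hfx, hfg.apply_apply_eq_zero]

theorem IsReflexiveModule.of_isTorsionless_of_exact (hfg : Function.Exact f g)
    (hf : Function.Injective f) (hext : Function.Surjective (LinearMap.lcomp Rᵐᵒᵖ R f))
    (hP : IsReflexiveModule R P) (hM : IsTorsionless R M) : IsReflexiveModule R X := by
  refine ⟨IsTorsionless.of_injective f hf hP.1, fun ξ => ?_⟩
  obtain ⟨p, hp⟩ := hP.2 (ξ ∘ₗ LinearMap.lcomp Rᵐᵒᵖ R f)
  have hgp : g p = 0 := hM <| LinearMap.ext fun ψ => by
    simpa [LinearMap.lcomp_apply', LinearMap.comp_assoc, hfg.linearMap_comp_eq_zero] using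
      LinearMap.congr_fun hp (ψ ∘ₗ g)
  obtain ⟨x, rfl⟩ := (hfg p).1 hgp
  refine ⟨x, LinearMap.ext fun φ => ?_⟩
  obtain ⟨φ', rfl⟩ := hext φ
  exact LinearMap.congr_fun hp φ'

end ExactSequence

theorem stmt1_general (A : Type u) [Ring A]
    (X : Type u) [AddCommGroup X] [Module A X]
    (P : Type u) [AddCommGroup P] [Module A P]
    (M : Type u) [AddCommGroup M] [Module A M]
    (f : X →ₗ[A] P) (g : P →ₗ[A] M)
    (hf : Function.Injective f) (hg : Function.Surjective g)
    (hexact : LinearMap.range f = LinearMap.ker g)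
    (happrox : IsLeftAddApprox A X P f) :
    IsReflexiveModule A X ↔ IsTorsionless A M := by
  obtain ⟨_, _, hfactor⟩ := happrox
  have hfg : Function.Exact f g := LinearMap.exact_iff.mpr hexact.symm
  have hext : Function.Surjective (LinearMap.lcomp Aᵐᵒᵖ A f) :=
    hfactor A _ _ inferInstance inferInstance
  have hP : IsReflexiveModule A P := isReflexiveModule_of_projective P
  exact ⟨.of_isReflexiveModule_of_exact hfg hg hext hP.1,
    .of_isTorsionless_of_exact hfg hf hext hP⟩

/-- Let `A` be an Artin algebra and `0 → X → P → M → 0` a short exact sequence of finitely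
generated left `A`-modules in which `X → P` is a left `add A`-approximation of `X`.
Then `X` is reflexive if and only if `M` is torsionless. -/
theorem stmt1 (R₀ : Type u) [CommRing R₀] [IsArtinianRing R₀] (A : Type u) [Ring A]
    [Algebra R₀ A] [Module.Finite R₀ A]
    (X : Type u) [AddCommGroup X] [Module A X] [Module.Finite A X]
    (P : Type u) [AddCommGroup P] [Module A P] [Module.Finite A P]
    (M : Type u) [AddCommGroup M] [Module A M] [Module.Finite A M]
    (f : X →ₗ[A] P) (g : P →ₗ[A] M)
    (hf : Function.Injective f) (hg : Function.Surjective g)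
    (hexact : LinearMap.range f = LinearMap.ker g)
    (happrox : IsLeftAddApprox A X P f) :
    IsReflexiveModule A X ↔ IsTorsionless A M :=
  stmt1_general A X P M f g hf hg hexact happrox
end

section
/- Let A and B be finite-dimensional k-algebras, X a finitely generated left A-module, Y a finitely generated left B-module. If f : X → P is a left add(A)-approximation and g : Y → Q is a left add(B)-approximation, then f ⊗ g : X ⊗_k Y → P ⊗_k Q is a left add(A ⊗_k B)-approximation. -/
universe u
open TensorProduct


section TensorMod
variable (k : Type u) [Field k] (A B : Type u) [Ring A] [Ring B] [Algebra k A] [Algebra k B]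
variable (M : Type u) [AddCommGroup M] [Module k M] [Module A M] [IsScalarTower k A M]
variable (X : Type u) [AddCommGroup X] [Module k X] [Module B X] [IsScalarTower k B X]

/-- The action of `A` on `M ⊗[k] X` through the first factor, as an algebra map. -/
noncomputable def TensorMod.rhoA : A →ₐ[k] Module.End k (M ⊗[k] X) where
  toFun a := LinearMap.rTensor X (DistribSMul.toLinearMap k M a)
  map_one' := TensorProduct.ext' fun m x => by simp
  map_mul' a a' := TensorProduct.ext' fun m x => by simp [mul_smul]
  map_zero' := TensorProduct.ext' fun m x => by simp
  map_add' a a' := TensorProduct.ext' fun m x => by simp [add_smul, add_tmul]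
  commutes' c := TensorProduct.ext' fun m x => by
    simp [Module.algebraMap_end_apply, algebraMap_smul, smul_tmul']

/-- The action of `B` on `M ⊗[k] X` through the second factor, as an algebra map. -/
noncomputable def TensorMod.rhoB : B →ₐ[k] Module.End k (M ⊗[k] X) where
  toFun b := LinearMap.lTensor M (DistribSMul.toLinearMap k X b)
  map_one' := TensorProduct.ext' fun m x => by simp
  map_mul' b b' := TensorProduct.ext' fun m x => by simp [mul_smul]
  map_zero' := TensorProduct.ext' fun m x => by simp
  map_add' b b' := TensorProduct.ext' fun m x => by simp [add_smul, tmul_add]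
  commutes' c := TensorProduct.ext' fun m x => by
    simp [Module.algebraMap_end_apply, algebraMap_smul, tmul_smul]

/-- The algebra map `A ⊗[k] B → End(M ⊗[k] X)` defining the module structure of the
tensor product of modules over the tensor product of algebras. -/
noncomputable def TensorMod.rho : (A ⊗[k] B) →ₐ[k] Module.End k (M ⊗[k] X) :=
  Algebra.TensorProduct.lift (TensorMod.rhoA k A M X) (TensorMod.rhoB k B M X)
    (fun a b => LinearMap.ext <| fun z => by
      refine z.induction_on ?_ (fun m x => ?_) (fun y z hy hz => ?_)
      · simp
      · show (TensorMod.rhoA k A M X a) ((TensorMod.rhoB k B M X b) (m ⊗ₜ[k] x)) =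
          (TensorMod.rhoB k B M X b) ((TensorMod.rhoA k A M X a) (m ⊗ₜ[k] x))
        simp [TensorMod.rhoA, TensorMod.rhoB]
      · show (TensorMod.rhoA k A M X a) ((TensorMod.rhoB k B M X b) (y + z)) =
          (TensorMod.rhoB k B M X b) ((TensorMod.rhoA k A M X a) (y + z))
        simp only [map_add]
        exact congrArg₂ (· + ·) hy hz)

/-- The `A ⊗[k] B`-module structure on `M ⊗[k] X`. -/
noncomputable instance TensorMod.module : Module (A ⊗[k] B) (M ⊗[k] X) :=
  Module.compHom _ (TensorMod.rho k A B M X).toRingHom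

lemma TensorMod.tsmul_tmul (a : A) (b : B) (m : M) (x : X) :
    (a ⊗ₜ[k] b) • (m ⊗ₜ[k] x) = (a • m) ⊗ₜ[k] (b • x) := by
  show (TensorMod.rho k A B M X (a ⊗ₜ[k] b)) (m ⊗ₜ[k] x) = _
  simp [TensorMod.rho, TensorMod.rhoA, TensorMod.rhoB]

instance TensorMod.smulCommClassK :
    SMulCommClass (A ⊗[k] B) k (M ⊗[k] X) where
  smul_comm r c z := by
    show (TensorMod.rho k A B M X r) (c • z) = c • (TensorMod.rho k A B M X r) z
    rw [map_smul]
end TensorMod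
section TensorHom
variable (k : Type u) [Field k] (A B : Type u) [Ring A] [Ring B] [Algebra k A] [Algebra k B]
variable (X : Type u) [AddCommGroup X] [Module k X] [Module A X] [IsScalarTower k A X]
variable (P : Type u) [AddCommGroup P] [Module k P] [Module A P] [IsScalarTower k A P]
variable (Y : Type u) [AddCommGroup Y] [Module k Y] [Module B Y] [IsScalarTower k B Y]
variable (Q : Type u) [AddCommGroup Q] [Module k Q] [Module B Q] [IsScalarTower k B Q]

/-- The `(A ⊗ B)`-linear map `f ⊗ g : X ⊗ Y → P ⊗ Q` induced by an `A`-linear map `f` and a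
`B`-linear map `g`. -/
noncomputable def tensorHom (f : X →ₗ[A] P) (g : Y →ₗ[B] Q) :
    (X ⊗[k] Y) →ₗ[A ⊗[k] B] (P ⊗[k] Q) where
  toFun := TensorProduct.map (f.restrictScalars k) (g.restrictScalars k)
  map_add' := map_add _
  map_smul' r z := by
    have key : ∀ (a : A) (b : B) (w : X ⊗[k] Y),
        TensorProduct.map (f.restrictScalars k) (g.restrictScalars k) ((a ⊗ₜ[k] b) • w) =
          (a ⊗ₜ[k] b) • TensorProduct.map (f.restrictScalars k) (g.restrictScalars k) w := by
      intro a b w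
      induction w using TensorProduct.induction_on with
      | zero => rw [smul_zero, map_zero, smul_zero]
      | tmul x y =>
          rw [TensorMod.tsmul_tmul, TensorProduct.map_tmul, TensorProduct.map_tmul,
            TensorMod.tsmul_tmul]
          show (f (a • x)) ⊗ₜ[k] (g (b • y)) = (a • f x) ⊗ₜ[k] (b • g y)
          rw [map_smul, map_smul]
      | add w₁ w₂ h₁ h₂ => rw [smul_add, map_add, h₁, h₂, map_add, smul_add]
    show TensorProduct.map (f.restrictScalars k) (g.restrictScalars k) (r • z) =
      r • TensorProduct.map (f.restrictScalars k) (g.restrictScalars k) z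
    induction r using TensorProduct.induction_on with
    | zero => rw [zero_smul, map_zero, zero_smul]
    | tmul a b => exact key a b z
    | add r s hr hs => rw [add_smul, map_add, hr, hs, add_smul]
end TensorHom


attribute [local instance 1001] Semiring.toModule

section Aux
variable (k : Type u) [Field k] (A B : Type u) [Ring A] [Ring B] [Algebra k A] [Algebra k B]

noncomputable instance lamModB : Module B (A ⊗[k] B) :=
  Module.compHom _ (Algebra.TensorProduct.includeRight (R := k) (A := A) (B := B)).toRingHom

lemma lamB_smul (b : B) (w : A ⊗[k] B) : b • w = (1 ⊗ₜ[k] b) * w := rfl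

lemma lamA_smul (a : A) (w : A ⊗[k] B) : a • w = (a ⊗ₜ[k] (1 : B)) * w := by
  induction w using TensorProduct.induction_on with
  | zero => simp
  | tmul x y => rw [smul_tmul', Algebra.TensorProduct.tmul_mul_tmul, smul_eq_mul, one_mul]
  | add x y hx hy => rw [smul_add, mul_add, hx, hy]

instance : SMulCommClass B A (A ⊗[k] B) where
  smul_comm b a w := by
    rw [lamA_smul, lamB_smul, lamB_smul, lamA_smul, ← mul_assoc, ← mul_assoc,
      Algebra.TensorProduct.tmul_mul_tmul, Algebra.TensorProduct.tmul_mul_tmul,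
      one_mul, mul_one, one_mul, mul_one]

instance : SMulCommClass A B (A ⊗[k] B) :=
  ⟨fun a b w => (smul_comm b a w).symm⟩

instance : IsScalarTower k B (A ⊗[k] B) where
  smul_assoc c b w := by
    rw [lamB_smul, lamB_smul, ← smul_mul_assoc, ← TensorProduct.tmul_smul]

instance : SMulCommClass B k (A ⊗[k] B) where
  smul_comm b c w := by
    rw [lamB_smul, lamB_smul, mul_smul_comm]

instance : SMulCommClass A k (A ⊗[k] B) where
  smul_comm a c w := by
    rw [lamA_smul, lamA_smul, mul_smul_comm]

instance : SMulCommClass B k B := SMulCommClass.symm k B B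
instance : SMulCommClass A k A := SMulCommClass.symm k A A

section Coord
variable (V : Type u) [AddCommGroup V] [Module k V]
variable {C : Type u} [Ring C] [Algebra k C]
variable {ι : Type} (b : Module.Basis ι k C)

/-- Coordinate of `C ⊗ V` along a basis vector of `C`. -/
noncomputable def lcoord (i : ι) : (C ⊗[k] V) →ₗ[k] V :=
  (TensorProduct.lid k V).toLinearMap ∘ₗ LinearMap.rTensor V (b.coord i)

@[simp] lemma lcoord_tmul (i : ι) (c : C) (v : V) :
    lcoord k V b i (c ⊗ₜ[k] v) = b.coord i c • v := by
  simp [lcoord]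

lemma sum_lcoord [Fintype ι] (w : C ⊗[k] V) :
    ∑ i, b i ⊗ₜ[k] lcoord k V b i w = w := by
  induction w using TensorProduct.induction_on with
  | zero => simp
  | tmul c v =>
      simp only [lcoord_tmul]
      have : ∀ i : ι, b i ⊗ₜ[k] (b.coord i c • v) = (b.coord i c • b i) ⊗ₜ[k] v := by
        intro i; rw [TensorProduct.tmul_smul, TensorProduct.smul_tmul']
      rw [Finset.sum_congr rfl (fun i _ => this i), ← TensorProduct.sum_tmul]
      congr 1
      simpa [Module.Basis.coord_apply] using b.sum_repr c
  | add x y hx hy =>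
      simp only [map_add, TensorProduct.tmul_add, Finset.sum_add_distrib, hx, hy]

/-- Coordinate of `V ⊗ C` along a basis vector of `C`. -/
noncomputable def rcoord (i : ι) : (V ⊗[k] C) →ₗ[k] V :=
  (TensorProduct.rid k V).toLinearMap ∘ₗ LinearMap.lTensor V (b.coord i)

@[simp] lemma rcoord_tmul (i : ι) (c : C) (v : V) :
    rcoord k V b i (v ⊗ₜ[k] c) = b.coord i c • v := by
  simp [rcoord]

lemma sum_rcoord [Fintype ι] (w : V ⊗[k] C) :
    ∑ i, rcoord k V b i w ⊗ₜ[k] b i = w := by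
  induction w using TensorProduct.induction_on with
  | zero => simp
  | tmul v c =>
      simp only [rcoord_tmul]
      have : ∀ i : ι, (b.coord i c • v) ⊗ₜ[k] b i = v ⊗ₜ[k] (b.coord i c • b i) := by
        intro i; rw [TensorProduct.tmul_smul, TensorProduct.smul_tmul']
      rw [Finset.sum_congr rfl (fun i _ => this i), ← TensorProduct.tmul_sum]
      congr 1
      simpa [Module.Basis.coord_apply] using b.sum_repr c
  | add x y hx hy =>
      simp only [map_add, TensorProduct.add_tmul, Finset.sum_add_distrib, hx, hy]

end Coord

lemma lcoord_mul_right {ι : Type} (bA : Module.Basis ι k A) (i : ι) (b : B) (w : A ⊗[k] B) :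
    lcoord k B bA i ((1 ⊗ₜ[k] b) * w) = b * lcoord k B bA i w := by
  induction w using TensorProduct.induction_on with
  | zero => simp
  | tmul x y =>
      rw [Algebra.TensorProduct.tmul_mul_tmul, one_mul, lcoord_tmul, lcoord_tmul,
        mul_smul_comm]
  | add x y hx hy => rw [mul_add, map_add, map_add, hx, hy, mul_add]

lemma rcoord_mul_left {ι : Type} (bB : Module.Basis ι k B) (i : ι) (a : A) (w : A ⊗[k] B) :
    rcoord k A bB i ((a ⊗ₜ[k] 1) * w) = a * rcoord k A bB i w := by
  induction w using TensorProduct.induction_on with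
  | zero => simp
  | tmul x y =>
      rw [Algebra.TensorProduct.tmul_mul_tmul, one_mul, rcoord_tmul, rcoord_tmul,
        mul_smul_comm]
  | add x y hx hy => rw [mul_add, map_add, map_add, hx, hy, mul_add]

end Aux


section FreeTensor
variable (k : Type u) [Field k] (C V : Type u) [Ring C] [Algebra k C]
variable [AddCommGroup V] [Module k V] [FiniteDimensional k V]

/-- `C ⊗ V` is a free `C`-module when `V` is a finite-dimensional `k`-space. -/
noncomputable def freeTensorEquiv :
    (C ⊗[k] V) ≃ₗ[C] (Fin (Module.finrank k V) →₀ C) := by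
  classical
  let bV := Module.finBasis k V
  let e : (C ⊗[k] V) ≃ₗ[k] (Fin (Module.finrank k V) →₀ C) :=
    (TensorProduct.congr (LinearEquiv.refl k C) bV.repr).trans
      (TensorProduct.finsuppScalarRight k k C (Fin (Module.finrank k V)))
  have hsmul : ∀ (c : C) (z : C ⊗[k] V), e (c • z) = c • e z := by
    intro c z
    induction z using TensorProduct.induction_on with
    | zero => rw [smul_zero, map_zero, smul_zero]
    | tmul x v =>
        rw [TensorProduct.smul_tmul', smul_eq_mul]
        show (TensorProduct.finsuppScalarRight k k C _)
            (TensorProduct.congr (LinearEquiv.refl k C) bV.repr ((c * x) ⊗ₜ[k] v)) = _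
        rw [TensorProduct.congr_tmul]
        ext i
        show (TensorProduct.finsuppScalarRight k k C _) ((c * x) ⊗ₜ[k] bV.repr v) i = _
        rw [TensorProduct.finsuppScalarRight_apply_tmul_apply, Finsupp.smul_apply]
        show _ = c * ((TensorProduct.finsuppScalarRight k k C _)
            (TensorProduct.congr (LinearEquiv.refl k C) bV.repr (x ⊗ₜ[k] v)) i)
        rw [TensorProduct.congr_tmul]
        show _ = c * ((TensorProduct.finsuppScalarRight k k C _) (x ⊗ₜ[k] bV.repr v) i)
        rw [TensorProduct.finsuppScalarRight_apply_tmul_apply, mul_smul_comm]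
    | add x y hx hy => rw [smul_add, map_add, hx, hy, map_add, smul_add]
  exact
    { toFun := e
      invFun := e.symm
      left_inv := e.left_inv
      right_inv := e.right_inv
      map_add' := e.map_add
      map_smul' := hsmul }

noncomputable instance : Module.Free C (C ⊗[k] V) :=
  Module.Free.of_equiv (freeTensorEquiv k C V).symm

instance freeTensor_finite : Module.Finite C (C ⊗[k] V) :=
  Module.Finite.equiv (freeTensorEquiv k C V).symm

end FreeTensor

section HomW
variable (k : Type u) [Field k] (A B : Type u) [Ring A] [Ring B] [Algebra k A] [Algebra k B]
variable [FiniteDimensional k A] [FiniteDimensional k B]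
variable (Y : Type u) [AddCommGroup Y] [Module k Y] [Module B Y] [IsScalarTower k B Y]

/-- Auxiliary map for `homExpand`. -/
noncomputable def homExpandAux (a : A) (v : Y →ₗ[B] B) : Y →ₗ[B] (A ⊗[k] B) where
  toFun y := a ⊗ₜ[k] v y
  map_add' y y' := by
    show a ⊗ₜ[k] v (y + y') = a ⊗ₜ[k] v y + a ⊗ₜ[k] v y'
    rw [map_add, TensorProduct.tmul_add]
  map_smul' b y := by
    show a ⊗ₜ[k] v (b • y) = b • (a ⊗ₜ[k] v y)
    rw [map_smul, lamB_smul, Algebra.TensorProduct.tmul_mul_tmul, one_mul, smul_eq_mul]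

/-- Bilinear version of `homExpandAux`. -/
noncomputable def homExpandBil :
    A →ₗ[k] (Y →ₗ[B] B) →ₗ[k] (Y →ₗ[B] (A ⊗[k] B)) :=
  LinearMap.mk₂ k (homExpandAux k A B Y)
    (fun a a' v => LinearMap.ext fun y =>
      (TensorProduct.add_tmul a a' (v y) : (a + a') ⊗ₜ[k] v y = _))
    (fun c a v => LinearMap.ext fun y =>
      by show (c • a) ⊗ₜ[k] v y = c • (a ⊗ₜ[k] v y); rw [TensorProduct.smul_tmul'])
    (fun a v v' => LinearMap.ext fun y =>
      (TensorProduct.tmul_add a (v y) (v' y) : a ⊗ₜ[k] (v + v') y = _))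
    (fun c a v => LinearMap.ext fun y => by
      show a ⊗ₜ[k] (c • v) y = c • (a ⊗ₜ[k] v y)
      rw [LinearMap.smul_apply, TensorProduct.tmul_smul])

/-- The expansion map `A ⊗ Hom_B(Y,B) → Hom_B(Y, A ⊗ B)`. -/
noncomputable def homExpand : (A ⊗[k] (Y →ₗ[B] B)) →ₗ[A] (Y →ₗ[B] (A ⊗[k] B)) where
  toFun := TensorProduct.lift (homExpandBil k A B Y)
  map_add' z z' := map_add _ z z'
  map_smul' a z := by
    show TensorProduct.lift (homExpandBil k A B Y) (a • z)
        = a • TensorProduct.lift (homExpandBil k A B Y) z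
    induction z using TensorProduct.induction_on with
    | zero => rw [smul_zero, map_zero, smul_zero]
    | tmul a' v =>
        rw [TensorProduct.smul_tmul', smul_eq_mul]
        apply LinearMap.ext; intro y
        show (a * a') ⊗ₜ[k] v y = (a • (TensorProduct.lift (homExpandBil k A B Y) (a' ⊗ₜ[k] v))) y
        rw [LinearMap.smul_apply]
        show _ = a • (a' ⊗ₜ[k] v y)
        rw [lamA_smul, Algebra.TensorProduct.tmul_mul_tmul, one_mul]
    | add x y hx hy => rw [smul_add, map_add, map_add, hx, hy, smul_add]

lemma homExpand_tmul_apply (a : A) (v : Y →ₗ[B] B) (y : Y) :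
    homExpand k A B Y (a ⊗ₜ[k] v) y = a ⊗ₜ[k] v y := rfl

lemma homExpand_bijective : Function.Bijective (homExpand k A B Y) := by
  classical
  set bA := Module.finBasis k A with hbA
  have key : ∀ (z : A ⊗[k] (Y →ₗ[B] B)) (i : Fin (Module.finrank k A)) (y : Y),
      (lcoord k (Y →ₗ[B] B) bA i z) y = lcoord k B bA i (homExpand k A B Y z y) := by
    intro z i y
    induction z using TensorProduct.induction_on with
    | zero => simp
    | tmul a v =>
        rw [lcoord_tmul, homExpand_tmul_apply, lcoord_tmul, LinearMap.smul_apply]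
    | add x w hx hw =>
        rw [map_add, map_add, LinearMap.add_apply, LinearMap.add_apply, map_add, hx, hw]
  constructor
  · intro z z' hzz'
    rw [← sum_lcoord k (Y →ₗ[B] B) bA z, ← sum_lcoord k (Y →ₗ[B] B) bA z']
    refine Finset.sum_congr rfl (fun i _ => ?_)
    congr 1
    apply LinearMap.ext; intro y
    rw [key, key, hzz']
  · intro φ
    refine ⟨∑ i, bA i ⊗ₜ[k]
      ({ toFun := fun y => lcoord k B bA i (φ y)
         map_add' := fun y y' => by
           show lcoord k B bA i (φ (y + y')) = lcoord k B bA i (φ y) + lcoord k B bA i (φ y')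
           rw [map_add, map_add]
         map_smul' := fun b y => by
           show lcoord k B bA i (φ (b • y)) = b • lcoord k B bA i (φ y)
           rw [map_smul, lamB_smul, lcoord_mul_right, smul_eq_mul] } : Y →ₗ[B] B), ?_⟩
    apply LinearMap.ext; intro y
    rw [map_sum, LinearMap.sum_apply]
    exact Eq.trans (Finset.sum_congr rfl fun i _ => rfl) (sum_lcoord k B bA (φ y))

/-- `Hom_B(Y, A ⊗ B)` is isomorphic to `A ⊗ Hom_B(Y,B)` as an `A`-module. -/
noncomputable def homExpandEquiv : (A ⊗[k] (Y →ₗ[B] B)) ≃ₗ[A] (Y →ₗ[B] (A ⊗[k] B)) :=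
  LinearEquiv.ofBijective _ (homExpand_bijective k A B Y)

end HomW


section HomWCor
variable (k : Type u) [Field k] (A B : Type u) [Ring A] [Ring B] [Algebra k A] [Algebra k B]
variable [FiniteDimensional k A] [FiniteDimensional k B]
variable (Y : Type u) [AddCommGroup Y] [Module k Y] [Module B Y] [IsScalarTower k B Y]
variable [Module.Finite B Y]

lemma homW_findim : FiniteDimensional k (Y →ₗ[B] B) := by
  haveI : Module.Finite k Y := Module.Finite.trans B Y
  exact FiniteDimensional.of_injective
    (LinearMap.restrictScalarsₗ (R := k) (S := B) (M := Y) (N := B) (R₁ := k))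
    (LinearMap.restrictScalars_injective k)

lemma homW_finite : Module.Finite A (Y →ₗ[B] (A ⊗[k] B)) := by
  haveI := homW_findim k B Y
  exact Module.Finite.equiv (homExpandEquiv k A B Y)

lemma homW_projective : Module.Projective A (Y →ₗ[B] (A ⊗[k] B)) := by
  haveI := homW_findim k B Y
  exact Module.Projective.of_equiv (homExpandEquiv k A B Y)

end HomWCor

section HomW2
variable (k : Type u) [Field k] (A B : Type u) [Ring A] [Ring B] [Algebra k A] [Algebra k B]
variable [FiniteDimensional k A] [FiniteDimensional k B]
variable (P : Type u) [AddCommGroup P] [Module k P] [Module A P] [IsScalarTower k A P]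

/-- Auxiliary map for `homExpand'`. -/
noncomputable def homExpandAux' (b : B) (v : P →ₗ[A] A) : P →ₗ[A] (A ⊗[k] B) where
  toFun p := v p ⊗ₜ[k] b
  map_add' p p' := by
    show v (p + p') ⊗ₜ[k] b = v p ⊗ₜ[k] b + v p' ⊗ₜ[k] b
    rw [map_add, TensorProduct.add_tmul]
  map_smul' a p := by
    show v (a • p) ⊗ₜ[k] b = a • (v p ⊗ₜ[k] b)
    rw [map_smul, lamA_smul, Algebra.TensorProduct.tmul_mul_tmul, one_mul, smul_eq_mul]

/-- Bilinear version of `homExpandAux'`. -/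
noncomputable def homExpandBil' :
    B →ₗ[k] (P →ₗ[A] A) →ₗ[k] (P →ₗ[A] (A ⊗[k] B)) :=
  LinearMap.mk₂ k (homExpandAux' k A B P)
    (fun b b' v => LinearMap.ext fun p =>
      (TensorProduct.tmul_add (v p) b b' : v p ⊗ₜ[k] (b + b') = _))
    (fun c b v => LinearMap.ext fun p => by
      show v p ⊗ₜ[k] (c • b) = c • (v p ⊗ₜ[k] b)
      rw [TensorProduct.tmul_smul])
    (fun b v v' => LinearMap.ext fun p =>
      (TensorProduct.add_tmul (v p) (v' p) b : (v + v') p ⊗ₜ[k] b = _))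
    (fun c b v => LinearMap.ext fun p => by
      show (c • v) p ⊗ₜ[k] b = c • (v p ⊗ₜ[k] b)
      rw [LinearMap.smul_apply, TensorProduct.smul_tmul'])

/-- The expansion map `B ⊗ Hom_A(P,A) → Hom_A(P, A ⊗ B)`. -/
noncomputable def homExpand' : (B ⊗[k] (P →ₗ[A] A)) →ₗ[B] (P →ₗ[A] (A ⊗[k] B)) where
  toFun := TensorProduct.lift (homExpandBil' k A B P)
  map_add' z z' := map_add _ z z'
  map_smul' b z := by
    show TensorProduct.lift (homExpandBil' k A B P) (b • z)
        = b • TensorProduct.lift (homExpandBil' k A B P) z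
    induction z using TensorProduct.induction_on with
    | zero => rw [smul_zero, map_zero, smul_zero]
    | tmul b' v =>
        rw [TensorProduct.smul_tmul', smul_eq_mul]
        apply LinearMap.ext; intro p
        show v p ⊗ₜ[k] (b * b')
          = (b • (TensorProduct.lift (homExpandBil' k A B P) (b' ⊗ₜ[k] v))) p
        rw [LinearMap.smul_apply]
        show _ = b • (v p ⊗ₜ[k] b')
        rw [lamB_smul, Algebra.TensorProduct.tmul_mul_tmul, one_mul]
    | add x y hx hy => rw [smul_add, map_add, map_add, hx, hy, smul_add]

lemma homExpand'_tmul_apply (b : B) (v : P →ₗ[A] A) (p : P) :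
    homExpand' k A B P (b ⊗ₜ[k] v) p = v p ⊗ₜ[k] b := rfl

lemma homExpand'_bijective : Function.Bijective (homExpand' k A B P) := by
  classical
  set bB := Module.finBasis k B with hbB
  have key : ∀ (z : B ⊗[k] (P →ₗ[A] A)) (j : Fin (Module.finrank k B)) (p : P),
      (lcoord k (P →ₗ[A] A) bB j z) p = rcoord k A bB j (homExpand' k A B P z p) := by
    intro z j p
    induction z using TensorProduct.induction_on with
    | zero => simp
    | tmul b v =>
        rw [lcoord_tmul, homExpand'_tmul_apply, rcoord_tmul, LinearMap.smul_apply]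
    | add x w hx hw =>
        rw [map_add, map_add, LinearMap.add_apply, LinearMap.add_apply, map_add, hx, hw]
  constructor
  · intro z z' hzz'
    rw [← sum_lcoord k (P →ₗ[A] A) bB z, ← sum_lcoord k (P →ₗ[A] A) bB z']
    refine Finset.sum_congr rfl (fun j _ => ?_)
    congr 1
    apply LinearMap.ext; intro p
    rw [key, key, hzz']
  · intro φ
    refine ⟨∑ j, bB j ⊗ₜ[k]
      ({ toFun := fun p => rcoord k A bB j (φ p)
         map_add' := fun p p' => by
           show rcoord k A bB j (φ (p + p')) = rcoord k A bB j (φ p) + rcoord k A bB j (φ p')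
           rw [map_add, map_add]
         map_smul' := fun a p => by
           show rcoord k A bB j (φ (a • p)) = a • rcoord k A bB j (φ p)
           rw [map_smul, lamA_smul, rcoord_mul_left, smul_eq_mul] } : P →ₗ[A] A), ?_⟩
    apply LinearMap.ext; intro p
    rw [map_sum, LinearMap.sum_apply]
    exact Eq.trans (Finset.sum_congr rfl fun j _ => rfl) (sum_rcoord k A bB (φ p))

/-- `Hom_A(P, A ⊗ B)` is isomorphic to `B ⊗ Hom_A(P,A)` as a `B`-module. -/
noncomputable def homExpandEquiv' : (B ⊗[k] (P →ₗ[A] A)) ≃ₗ[B] (P →ₗ[A] (A ⊗[k] B)) :=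
  LinearEquiv.ofBijective _ (homExpand'_bijective k A B P)

variable [Module.Finite A P]

lemma homW'_findim : FiniteDimensional k (P →ₗ[A] A) := by
  haveI : Module.Finite k P := Module.Finite.trans A P
  exact FiniteDimensional.of_injective
    (LinearMap.restrictScalarsₗ (R := k) (S := A) (M := P) (N := A) (R₁ := k))
    (LinearMap.restrictScalars_injective k)

lemma homW'_finite : Module.Finite B (P →ₗ[A] (A ⊗[k] B)) := by
  haveI := homW'_findim k A P
  exact Module.Finite.equiv (homExpandEquiv' k A B P)

lemma homW'_projective : Module.Projective B (P →ₗ[A] (A ⊗[k] B)) := by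
  haveI := homW'_findim k A P
  exact Module.Projective.of_equiv (homExpandEquiv' k A B P)

end HomW2



section Helpers
variable {R M N : Type*} [Semiring R] [AddCommMonoid M] [Module R M]
  [AddCommMonoid N] [Module R N]

lemma mzero_smul (z : M) : (0 : R) • z = 0 := zero_smul R z
lemma msmul_zero (r : R) : r • (0 : M) = 0 := smul_zero r
lemma msmul_add (r : R) (x y : M) : r • (x + y) = r • x + r • y := smul_add r x y
lemma madd_smul (r s : R) (x : M) : (r + s) • x = r • x + s • x := add_smul r s x
lemma lmap_zero (E : M →ₗ[R] N) : E 0 = 0 := map_zero E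
lemma lmap_add (E : M →ₗ[R] N) (x y : M) : E (x + y) = E x + E y := map_add E x y

end Helpers

section TowerInst
variable (k : Type u) [Field k] (A B : Type u) [Ring A] [Ring B] [Algebra k A] [Algebra k B]
variable (M : Type u) [AddCommGroup M] [Module k M] [Module A M] [IsScalarTower k A M]
variable (X : Type u) [AddCommGroup X] [Module k X] [Module B X] [IsScalarTower k B X]

instance TensorMod.isScalarTower : IsScalarTower k (A ⊗[k] B) (M ⊗[k] X) :=
  IsScalarTower.of_algebraMap_smul fun c z => by
    show TensorMod.rho k A B M X (algebraMap k (A ⊗[k] B) c) z = c • z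
    rw [AlgHom.commutes]
    exact Module.algebraMap_end_apply (R := k) (S := k) (M := M ⊗[k] X) c z

lemma tensorHom_tmul (P : Type u) [AddCommGroup P] [Module k P] [Module A P]
    [IsScalarTower k A P] (Q : Type u) [AddCommGroup Q] [Module k Q] [Module B Q]
    [IsScalarTower k B Q] (f : M →ₗ[A] P) (g : X →ₗ[B] Q) (m : M) (x : X) :
    tensorHom k A B M P X Q f g (m ⊗ₜ[k] x) = f m ⊗ₜ[k] g x := rfl

lemma finsuppTensorLam_smul (ι κ : Type u) (r : A ⊗[k] B) (z : (ι →₀ A) ⊗[k] (κ →₀ B)) :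
    (finsuppTensorFinsupp k k A B ι κ).toLinearMap (r • z)
      = r • (finsuppTensorFinsupp k k A B ι κ).toLinearMap z := by
  set E := (finsuppTensorFinsupp k k A B ι κ).toLinearMap with hE
  induction r using TensorProduct.induction_on with
  | zero => rw [mzero_smul z, mzero_smul (E z), lmap_zero E]
  | add r s hr hs => rw [madd_smul r s z, lmap_add E, hr, hs, madd_smul r s (E z)]
  | tmul a b =>
      induction z using TensorProduct.induction_on with
      | zero => rw [msmul_zero (a ⊗ₜ[k] b), lmap_zero E, msmul_zero (a ⊗ₜ[k] b)]
      | add z z' hz hz' =>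
          rw [msmul_add (a ⊗ₜ[k] b) z z', lmap_add E, lmap_add E, hz, hz',
            msmul_add (a ⊗ₜ[k] b) (E z) (E z')]
      | tmul F G =>
          rw [TensorMod.tsmul_tmul]
          apply Finsupp.ext; intro ij
          rcases ij with ⟨i, j⟩
          show (finsuppTensorFinsupp k k A B ι κ) ((a • F) ⊗ₜ[k] (b • G)) (i, j)
            = ((a ⊗ₜ[k] b) • (finsuppTensorFinsupp k k A B ι κ) (F ⊗ₜ[k] G)) (i, j)
          rw [Finsupp.smul_apply, finsuppTensorFinsupp_apply, finsuppTensorFinsupp_apply,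
            Finsupp.smul_apply, Finsupp.smul_apply, smul_eq_mul, smul_eq_mul, smul_eq_mul,
            Algebra.TensorProduct.tmul_mul_tmul]

/-- `(ι →₀ A) ⊗ (κ →₀ B)` is the free `A ⊗ B`-module on `ι × κ`. -/
noncomputable def finsuppTensorLam (ι κ : Type u) :
    ((ι →₀ A) ⊗[k] (κ →₀ B)) ≃ₗ[A ⊗[k] B] ((ι × κ) →₀ (A ⊗[k] B)) :=
  { toFun := finsuppTensorFinsupp k k A B ι κ
    invFun := (finsuppTensorFinsupp k k A B ι κ).symm
    left_inv := (finsuppTensorFinsupp k k A B ι κ).left_inv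
    right_inv := (finsuppTensorFinsupp k k A B ι κ).right_inv
    map_add' := (finsuppTensorFinsupp k k A B ι κ).map_add
    map_smul' := finsuppTensorLam_smul k A B ι κ }

end TowerInst

/-- Factorizations through maps into the ring itself extend to factorizations through
maps into any finitely generated projective module. -/
theorem reduction {R M P' : Type u} [Ring R] [AddCommGroup M] [Module R M]
    [AddCommGroup P'] [Module R P'] (F : M →ₗ[R] P')
    (hfree : ∀ h0 : M →ₗ[R] R, ∃ u : P' →ₗ[R] R, u.comp F = h0)
    (N : Type u) (hN1 : AddCommGroup N) (hN2 : @Module R N _ hN1.toAddCommMonoid)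
    (hfin : Module.Finite R N) (hproj : Module.Projective R N) (h : M →ₗ[R] N) :
    ∃ u : P' →ₗ[R] N, u.comp F = h := by
  obtain ⟨n, π, hπ⟩ := Module.Finite.exists_fin' R N
  obtain ⟨σ, hσ⟩ := Module.projective_lifting_property π LinearMap.id hπ
  choose us hus using fun t : Fin n => hfree ((LinearMap.proj t).comp (σ.comp h))
  refine ⟨π.comp (LinearMap.pi us), ?_⟩
  rw [LinearMap.comp_assoc, LinearMap.pi_comp]
  have e1 : (LinearMap.pi fun t => (us t).comp F) = σ.comp h := by
    simp_rw [hus]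
    apply LinearMap.ext; intro m
    funext t
    rfl
  rw [e1, ← LinearMap.comp_assoc, hσ, LinearMap.id_comp]

/-- The heart of the argument: any map from `X ⊗ Y` to `A ⊗ B` factors through `f ⊗ g`. -/
theorem factor_into_lam (k : Type u) [Field k] (A B : Type u) [Ring A] [Ring B] [Algebra k A]
    [Algebra k B] [FiniteDimensional k A] [FiniteDimensional k B]
    (X : Type u) [AddCommGroup X] [Module k X] [Module A X] [IsScalarTower k A X]
    (P : Type u) [AddCommGroup P] [Module k P] [Module A P] [IsScalarTower k A P]
    (Y : Type u) [AddCommGroup Y] [Module k Y] [Module B Y] [IsScalarTower k B Y]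
    [Module.Finite B Y]
    (Q : Type u) [AddCommGroup Q] [Module k Q] [Module B Q] [IsScalarTower k B Q]
    (f : X →ₗ[A] P) (g : Y →ₗ[B] Q)
    (hf : IsLeftAddApprox A X P f) (hg : IsLeftAddApprox B Y Q g)
    (h : (X ⊗[k] Y) →ₗ[A ⊗[k] B] (A ⊗[k] B)) :
    ∃ u : (P ⊗[k] Q) →ₗ[A ⊗[k] B] (A ⊗[k] B),
      u.comp (tensorHom k A B X P Y Q f g) = h := by
  classical
  obtain ⟨finP, projP, hfP⟩ := hf
  obtain ⟨finQ, projQ, hgQ⟩ := hg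
  -- Step 1: curry `h` into an `A`-linear map `X → Hom_B(Y, A ⊗ B)` and factor it through `f`.
  let h₁ : X →ₗ[A] (Y →ₗ[B] (A ⊗[k] B)) :=
    { toFun := fun x =>
        { toFun := fun y => h (x ⊗ₜ[k] y)
          map_add' := fun y y' => by
            show h (x ⊗ₜ[k] (y + y')) = h (x ⊗ₜ[k] y) + h (x ⊗ₜ[k] y')
            rw [TensorProduct.tmul_add, map_add]
          map_smul' := fun b y => by
            show h (x ⊗ₜ[k] (b • y)) = b • h (x ⊗ₜ[k] y)
            have e1 : x ⊗ₜ[k] (b • y) = ((1 : A) ⊗ₜ[k] b) • (x ⊗ₜ[k] y) := by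
              rw [TensorMod.tsmul_tmul, one_smul]
            rw [e1, map_smul, lamB_smul, smul_eq_mul] }
      map_add' := fun x x' => LinearMap.ext fun y => by
        show h ((x + x') ⊗ₜ[k] y) = h (x ⊗ₜ[k] y) + h (x' ⊗ₜ[k] y)
        rw [TensorProduct.add_tmul, map_add]
      map_smul' := fun a x => LinearMap.ext fun y => by
        show h ((a • x) ⊗ₜ[k] y) = a • h (x ⊗ₜ[k] y)
        have e1 : (a • x) ⊗ₜ[k] y = (a ⊗ₜ[k] (1 : B)) • (x ⊗ₜ[k] y) := by
          rw [TensorMod.tsmul_tmul, one_smul]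
        rw [e1, map_smul, lamA_smul, smul_eq_mul] }
  obtain ⟨u, hu⟩ := hfP (Y →ₗ[B] (A ⊗[k] B)) inferInstance inferInstance
    (homW_finite k A B Y) (homW_projective k A B Y) h₁
  -- Step 2: curry `u` into a `B`-linear map `Y → Hom_A(P, A ⊗ B)` and factor it through `g`.
  haveI : Module.Finite A P := finP
  let h₂ : Y →ₗ[B] (P →ₗ[A] (A ⊗[k] B)) :=
    { toFun := fun y =>
        { toFun := fun p => u p y
          map_add' := fun p p' => by
            show u (p + p') y = u p y + u p' y
            rw [map_add, LinearMap.add_apply]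
          map_smul' := fun a p => by
            show u (a • p) y = a • u p y
            rw [map_smul, LinearMap.smul_apply] }
      map_add' := fun y y' => LinearMap.ext fun p => by
        show u p (y + y') = u p y + u p y'
        rw [map_add]
      map_smul' := fun b y => LinearMap.ext fun p => by
        show u p (b • y) = b • u p y
        exact map_smul (u p) b y }
  obtain ⟨v, hv⟩ := hgQ (P →ₗ[A] (A ⊗[k] B)) inferInstance inferInstance
    (homW'_finite k A B P) (homW'_projective k A B P) h₂
  -- Step 3: uncurry `v` into the desired factorization.
  let bilH : P →ₗ[k] Q →ₗ[k] (A ⊗[k] B) :=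
    LinearMap.mk₂ k (fun p q => v q p)
      (fun p p' q => by show v q (p + p') = v q p + v q p'; rw [map_add])
      (fun c p q => by
        show v q (c • p) = c • v q p
        exact LinearMap.map_smul_of_tower (v q) c p)
      (fun p q q' => by show v (q + q') p = v q p + v q' p; rw [map_add, LinearMap.add_apply])
      (fun c p q => by
        show v (c • q) p = c • v q p
        rw [← algebraMap_smul B c q, map_smul, LinearMap.smul_apply, algebraMap_smul])
  refine ⟨{ toFun := TensorProduct.lift bilH
            map_add' := fun z z' => map_add _ z z'
            map_smul' := ?_ }, ?_⟩
  · intro r z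
    show TensorProduct.lift bilH (r • z) = r • TensorProduct.lift bilH z
    induction r using TensorProduct.induction_on with
    | zero => rw [zero_smul, zero_smul, map_zero]
    | add r s hr hs => rw [add_smul, map_add, hr, hs, add_smul]
    | tmul a b =>
        induction z using TensorProduct.induction_on with
        | zero => rw [smul_zero, map_zero, smul_zero]
        | add z z' hz hz' => rw [smul_add, map_add, map_add, hz, hz', smul_add]
        | tmul p q =>
            rw [TensorMod.tsmul_tmul]
            show v (b • q) (a • p) = (a ⊗ₜ[k] b) • v q p
            rw [map_smul v b q, LinearMap.smul_apply, map_smul (v q) a p,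
              lamB_smul, lamA_smul, smul_eq_mul, ← mul_assoc,
              Algebra.TensorProduct.tmul_mul_tmul, one_mul, mul_one]
  · apply LinearMap.ext; intro z
    induction z using TensorProduct.induction_on with
    | zero => simp
    | tmul x y =>
        show TensorProduct.lift bilH (tensorHom k A B X P Y Q f g (x ⊗ₜ[k] y)) = h (x ⊗ₜ[k] y)
        rw [tensorHom_tmul]
        show v (g y) (f x) = h (x ⊗ₜ[k] y)
        have e2 : v (g y) = h₂ y := DFunLike.congr_fun hv y
        rw [e2]
        show u (f x) y = h (x ⊗ₜ[k] y)
        have e3 : u (f x) = h₁ x := DFunLike.congr_fun hu x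
        rw [e3]
        rfl
    | add z z' hz hz' =>
        rw [map_add, map_add, hz, hz']

/-- If `f : X → P` is a left `add A`-approximation and `g : Y → Q` is a left
`add B`-approximation, then `f ⊗ g : X ⊗ Y → P ⊗ Q` is a left `add (A ⊗ B)`-approximation. -/
theorem stmt5 (k : Type u) [Field k] (A B : Type u) [Ring A] [Ring B] [Algebra k A]
    [Algebra k B] [FiniteDimensional k A] [FiniteDimensional k B]
    (X : Type u) [AddCommGroup X] [Module k X] [Module A X] [IsScalarTower k A X]
    [Module.Finite A X]
    (P : Type u) [AddCommGroup P] [Module k P] [Module A P] [IsScalarTower k A P]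
    (Y : Type u) [AddCommGroup Y] [Module k Y] [Module B Y] [IsScalarTower k B Y]
    [Module.Finite B Y]
    (Q : Type u) [AddCommGroup Q] [Module k Q] [Module B Q] [IsScalarTower k B Q]
    (f : X →ₗ[A] P) (g : Y →ₗ[B] Q)
    (hf : IsLeftAddApprox A X P f) (hg : IsLeftAddApprox B Y Q g) :
    IsLeftAddApprox (A ⊗[k] B) (X ⊗[k] Y) (P ⊗[k] Q)
      (tensorHom k A B X P Y Q f g) := by
  classical
  refine ⟨?_, ?_, ?_⟩
  · haveI := hf.1
    haveI := hg.1
    haveI : Module.Finite k P := Module.Finite.trans A P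
    haveI : Module.Finite k Q := Module.Finite.trans B Q
    exact Module.Finite.of_restrictScalars_finite k (A ⊗[k] B) (P ⊗[k] Q)
  · obtain ⟨sP, hsP⟩ := Module.projective_def.mp hf.2.1
    obtain ⟨sQ, hsQ⟩ := Module.projective_def.mp hg.2.1
    refine Module.Projective.of_split
      ((finsuppTensorLam k A B P Q).toLinearMap.comp
        (tensorHom k A B P (P →₀ A) Q (Q →₀ B) sP sQ))
      ((tensorHom k A B (P →₀ A) P (Q →₀ B) Q
          (Finsupp.linearCombination A id) (Finsupp.linearCombination B id)).comp
        (finsuppTensorLam k A B P Q).symm.toLinearMap) ?_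
    apply LinearMap.ext; intro z
    show tensorHom k A B (P →₀ A) P (Q →₀ B) Q
        (Finsupp.linearCombination A id) (Finsupp.linearCombination B id)
        ((finsuppTensorLam k A B P Q).symm ((finsuppTensorLam k A B P Q)
          (tensorHom k A B P (P →₀ A) Q (Q →₀ B) sP sQ z))) = z
    rw [LinearEquiv.symm_apply_apply]
    induction z using TensorProduct.induction_on with
    | zero =>
        rw [lmap_zero (tensorHom k A B P (P →₀ A) Q (Q →₀ B) sP sQ),
          lmap_zero (tensorHom k A B (P →₀ A) P (Q →₀ B) Q
            (Finsupp.linearCombination A id) (Finsupp.linearCombination B id))]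
    | tmul p q =>
        rw [tensorHom_tmul, tensorHom_tmul]
        show (Finsupp.linearCombination A id) (sP p) ⊗ₜ[k]
            (Finsupp.linearCombination B id) (sQ q) = p ⊗ₜ[k] q
        rw [hsP p, hsQ q]
    | add z z' hz hz' => rw [map_add, map_add, hz, hz']
  · intro Q' hQ1 hQ2 hfin hproj g'
    exact reduction (tensorHom k A B X P Y Q f g)
      (factor_into_lam k A B X P Y Q f g hf hg) Q' hQ1 hQ2 hfin hproj g'
end

section
/- Let A and B be finite-dimensional k-algebras, X a nonzero finitely generated left A-module and Y a nonzero finitely generated left B-module. Then X ⊗_k Y is a torsionless (A ⊗_k B)-module if and only if X is a torsionless A-module and Y is a torsionless B-module. -/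
/-!
Suppose `X ⊗ Y` is torsionless and `y ≠ 0`. For an `(A ⊗ B)`-linear functional `F` on `X ⊗ Y`
and `φ ∈ B*`, the map `x ↦ (id ⊗ φ) (F (x ⊗ y))` is an `A`-linear functional on `X`. So if `x`
is killed by every `A`-linear functional, `F (x ⊗ y)` is killed by every `id ⊗ φ`; these maps
separate the points of `A ⊗ B`, hence `x ⊗ y = 0` and `x = 0`.

Conversely, if `X` is torsionless, the `k`-linear functionals `l ∘ f` (`f : X → A` `A`-linear,
`l ∈ A*`) separate the points of `X`, and likewise for `Y`. Over a field, tensor products of two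
point-separating families of functionals separate the points of `X ⊗ Y`, and
`(l ∘ f) ⊗ (m ∘ g) = (l ⊗ m) ∘ (f ⊗ g)` factors through the `(A ⊗ B)`-linear functional `f ⊗ g`.
-/

universe u
open TensorProduct

open Module

lemma isTorsionless_iff {R M : Type u} [Ring R] [AddCommGroup M] [Module R M] :
    IsTorsionless R M ↔ ∀ m : M, (∀ f : M →ₗ[R] R, f m = 0) → m = 0 := by
  rw [IsTorsionless, injective_iff_map_eq_zero]
  exact forall_congr' fun m =>
    ⟨fun h hm => h (LinearMap.ext hm), fun h hm => h fun f => DFunLike.congr_fun hm f⟩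

namespace TensorProduct

section VectorSpace

variable {k V W : Type*} [Field k] [AddCommGroup V] [Module k V] [AddCommGroup W] [Module k W]

lemma eq_zero_of_forall_map_dual_eq_zero {z : V ⊗[k] W}
    (h : ∀ (α : Dual k V) (β : Dual k W), map α β z = 0) : z = 0 := by
  let bV := Basis.ofVectorSpace k V
  let bW := Basis.ofVectorSpace k W
  have repr_eq : ∀ i j (t : V ⊗[k] W),
      (bV.tensorProduct bW).repr t (i, j) =
        TensorProduct.lid k k (map (bV.coord i) (bW.coord j) t) := by
    intro i j t
    induction t using TensorProduct.induction_on with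
    | zero => simp
    | tmul v w => simp [Basis.tensorProduct_repr_tmul_apply, mul_comm]
    | add t₁ t₂ h₁ h₂ => simp [h₁, h₂]
  refine (bV.tensorProduct bW).repr.map_eq_zero_iff.mp (Finsupp.ext fun ⟨i, j⟩ => ?_)
  simp [repr_eq, h]

lemma dual_apply_rid_lTensor (α : Dual k V) (β : Dual k W) (z : V ⊗[k] W) :
    α (TensorProduct.rid k V (β.lTensor V z)) = TensorProduct.lid k k (map α β z) := by
  induction z using TensorProduct.induction_on with
  | zero => simp
  | tmul v w => simp [mul_comm]
  | add z₁ z₂ h₁ h₂ => simp [h₁, h₂]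

lemma dual_apply_lid_rTensor (α : Dual k V) (β : Dual k W) (z : V ⊗[k] W) :
    β (TensorProduct.lid k W (α.rTensor W z)) = TensorProduct.lid k k (map α β z) := by
  induction z using TensorProduct.induction_on with
  | zero => simp
  | tmul v w => simp
  | add z₁ z₂ h₁ h₂ => simp [h₁, h₂]

lemma eq_zero_of_forall_rid_lTensor_eq_zero {z : V ⊗[k] W}
    (h : ∀ β : Dual k W, TensorProduct.rid k V (β.lTensor V z) = 0) : z = 0 :=
  eq_zero_of_forall_map_dual_eq_zero fun α β => by
    rw [← (TensorProduct.lid k k).map_eq_zero_iff, ← dual_apply_rid_lTensor, h, map_zero]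

lemma eq_zero_of_forall_lid_rTensor_eq_zero {z : V ⊗[k] W}
    (h : ∀ α : Dual k V, TensorProduct.lid k W (α.rTensor W z) = 0) : z = 0 :=
  eq_zero_of_forall_map_dual_eq_zero fun α β => by
    rw [← (TensorProduct.lid k k).map_eq_zero_iff, ← dual_apply_lid_rTensor, h, map_zero]

lemma eq_zero_of_forall_map_eq_zero_of_separating {S : Set (Dual k V)} {T : Set (Dual k W)}
    (hS : ∀ v, (∀ α ∈ S, α v = 0) → v = 0) (hT : ∀ w, (∀ β ∈ T, β w = 0) → w = 0)
    {z : V ⊗[k] W} (h : ∀ α ∈ S, ∀ β ∈ T, map α β z = 0) : z = 0 := by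
  -- Contracting `z` with `β ∈ T` gives a vector of `V` killed by `S`, hence zero.
  have h_left : ∀ (α : Dual k V), ∀ β ∈ T, map α β z = 0 := fun α β hβ => by
    have : TensorProduct.rid k V (β.lTensor V z) = 0 := hS _ fun α' hα' => by
      rw [dual_apply_rid_lTensor, h α' hα' β hβ, map_zero]
    rw [← (TensorProduct.lid k k).map_eq_zero_iff, ← dual_apply_rid_lTensor, this, map_zero]
  refine eq_zero_of_forall_lid_rTensor_eq_zero fun α => hT _ fun β hβ => ?_
  rw [dual_apply_lid_rTensor, h_left α β hβ, map_zero]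

lemma tmul_eq_zero_iff_of_field {v : V} {w : W} : v ⊗ₜ[k] w = 0 ↔ v = 0 ∨ w = 0 := by
  refine ⟨fun h => ?_, by rintro (rfl | rfl) <;> simp⟩
  by_contra! hvw
  obtain ⟨α, hα⟩ := Projective.exists_dual_ne_zero k hvw.1
  obtain ⟨β, hβ⟩ := Projective.exists_dual_ne_zero k hvw.2
  have := congrArg (TensorProduct.lid k k ∘ map α β) h
  simp [hα, hβ] at this

end VectorSpace

end TensorProduct

section Slice

variable {k A B : Type*} [CommSemiring k] [Semiring A] [Semiring B] [Algebra k A] [Algebra k B]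

lemma rid_lTensor_tmul_one_mul (φ : Dual k B) (a : A) (w : A ⊗[k] B) :
    TensorProduct.rid k A (φ.lTensor A ((a ⊗ₜ 1) * w)) =
      a * TensorProduct.rid k A (φ.lTensor A w) := by
  induction w using TensorProduct.induction_on with
  | zero => simp
  | tmul a' b => simp [Algebra.TensorProduct.tmul_mul_tmul]
  | add w₁ w₂ h₁ h₂ => simp only [mul_add, map_add, h₁, h₂]

lemma lid_rTensor_one_tmul_mul (φ : Dual k A) (b : B) (w : A ⊗[k] B) :
    TensorProduct.lid k B (φ.rTensor B ((1 ⊗ₜ b) * w)) =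
      b * TensorProduct.lid k B (φ.rTensor B w) := by
  induction w using TensorProduct.induction_on with
  | zero => simp
  | tmul a b' => simp [Algebra.TensorProduct.tmul_mul_tmul]
  | add w₁ w₂ h₁ h₂ => simp only [mul_add, map_add, h₁, h₂]

end Slice

lemma IsTorsionless.eq_zero_of_forall_dual_apply_apply_eq_zero {k : Type*} {A X : Type u}
    [CommRing k] [Ring A] [Algebra k A] [Projective k A] [AddCommGroup X] [Module A X]
    (h : IsTorsionless A X) {x : X}
    (hx : ∀ (l : Dual k A) (f : X →ₗ[A] A), l (f x) = 0) : x = 0 :=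
  isTorsionless_iff.mp h x fun f => (forall_dual_apply_eq_zero_iff k (f x)).mp (hx · f)

section TensorModule

variable {k A B : Type u} [Field k] [Ring A] [Ring B] [Algebra k A] [Algebra k B]
  {X : Type u} [AddCommGroup X] [Module k X] [Module A X] [IsScalarTower k A X]
  {Y : Type u} [AddCommGroup Y] [Module k Y] [Module B Y] [IsScalarTower k B Y]

variable (k) in
noncomputable def tensorDual (f : X →ₗ[A] A) (g : Y →ₗ[B] B) :
    X ⊗[k] Y →ₗ[A ⊗[k] B] A ⊗[k] B where
  toFun := map (f.restrictScalars k) (g.restrictScalars k)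
  map_add' := map_add _
  map_smul' r z := by
    induction r using TensorProduct.induction_on with
    | zero => simp
    | tmul a b =>
      induction z using TensorProduct.induction_on with
      | zero => simp
      | tmul x y => simp [TensorMod.tsmul_tmul, Algebra.TensorProduct.tmul_mul_tmul]
      | add z₁ z₂ h₁ h₂ => simp only [smul_add, map_add, h₁, h₂]
    | add r₁ r₂ h₁ h₂ => simp only [add_smul, map_add, h₁, h₂]

noncomputable def leftSlice (F : X ⊗[k] Y →ₗ[A ⊗[k] B] A ⊗[k] B) (y : Y) (φ : Dual k B) :
    X →ₗ[A] A where
  toFun x := TensorProduct.rid k A (φ.lTensor A (F (x ⊗ₜ y)))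
  map_add' x₁ x₂ := by simp only [add_tmul, map_add]
  map_smul' a x := by
    rw [← one_smul B y, ← TensorMod.tsmul_tmul, one_smul, F.map_smul, smul_eq_mul]
    exact rid_lTensor_tmul_one_mul φ a _

noncomputable def rightSlice (F : X ⊗[k] Y →ₗ[A ⊗[k] B] A ⊗[k] B) (x : X) (φ : Dual k A) :
    Y →ₗ[B] B where
  toFun y := TensorProduct.lid k B (φ.rTensor B (F (x ⊗ₜ y)))
  map_add' y₁ y₂ := by simp only [tmul_add, map_add]
  map_smul' b y := by
    rw [← one_smul A x, ← TensorMod.tsmul_tmul, one_smul, F.map_smul, smul_eq_mul]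
    exact lid_rTensor_one_tmul_mul φ b _

lemma IsTorsionless.of_tensor_left [Nontrivial Y] (h : IsTorsionless (A ⊗[k] B) (X ⊗[k] Y)) :
    IsTorsionless A X := by
  rw [isTorsionless_iff] at h ⊢
  intro x hx
  obtain ⟨y, hy⟩ := exists_ne (0 : Y)
  have hxy : x ⊗ₜ[k] y = 0 := h _ fun F =>
    eq_zero_of_forall_rid_lTensor_eq_zero fun φ => hx (leftSlice F y φ)
  exact (tmul_eq_zero_iff_of_field.mp hxy).resolve_right hy

lemma IsTorsionless.of_tensor_right [Nontrivial X] (h : IsTorsionless (A ⊗[k] B) (X ⊗[k] Y)) :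
    IsTorsionless B Y := by
  rw [isTorsionless_iff] at h ⊢
  intro y hy
  obtain ⟨x, hx⟩ := exists_ne (0 : X)
  have hxy : x ⊗ₜ[k] y = 0 := h _ fun F =>
    eq_zero_of_forall_lid_rTensor_eq_zero fun φ => hy (rightSlice F x φ)
  exact (tmul_eq_zero_iff_of_field.mp hxy).resolve_left hx

lemma IsTorsionless.tensor (hX : IsTorsionless A X) (hY : IsTorsionless B Y) :
    IsTorsionless (A ⊗[k] B) (X ⊗[k] Y) := by
  refine isTorsionless_iff.mpr fun z hz => ?_
  refine eq_zero_of_forall_map_eq_zero_of_separating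
    (S := {α | ∃ (l : Dual k A) (f : X →ₗ[A] A), α = l ∘ₗ f.restrictScalars k})
    (T := {β | ∃ (m : Dual k B) (g : Y →ₗ[B] B), β = m ∘ₗ g.restrictScalars k})
    (fun x hx => hX.eq_zero_of_forall_dual_apply_apply_eq_zero fun l f => hx _ ⟨l, f, rfl⟩)
    (fun y hy => hY.eq_zero_of_forall_dual_apply_apply_eq_zero fun m g => hy _ ⟨m, g, rfl⟩) ?_
  rintro _ ⟨l, f, rfl⟩ _ ⟨m, g, rfl⟩
  have hfg : map (f.restrictScalars k) (g.restrictScalars k) z = 0 := hz (tensorDual k f g)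
  rw [map_comp, LinearMap.comp_apply, hfg, map_zero]

end TensorModule

theorem stmt7_general (k : Type u) [Field k] (A B : Type u) [Ring A] [Ring B] [Algebra k A]
    [Algebra k B]
    (X : Type u) [AddCommGroup X] [Module k X] [Module A X] [IsScalarTower k A X]
    [Nontrivial X]
    (Y : Type u) [AddCommGroup Y] [Module k Y] [Module B Y] [IsScalarTower k B Y]
    [Nontrivial Y] :
    IsTorsionless (A ⊗[k] B) (X ⊗[k] Y) ↔ IsTorsionless A X ∧ IsTorsionless B Y :=
  ⟨fun h => ⟨h.of_tensor_left, h.of_tensor_right⟩, fun ⟨hX, hY⟩ => hX.tensor hY⟩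

/-- For nonzero finitely generated modules `X` over `A` and `Y` over `B`, the
`(A ⊗ B)`-module `X ⊗_k Y` is torsionless if and only if `X` and `Y` are torsionless. -/
theorem stmt7 (k : Type u) [Field k] (A B : Type u) [Ring A] [Ring B] [Algebra k A]
    [Algebra k B] [FiniteDimensional k A] [FiniteDimensional k B]
    (X : Type u) [AddCommGroup X] [Module k X] [Module A X] [IsScalarTower k A X]
    [Module.Finite A X] [Nontrivial X]
    (Y : Type u) [AddCommGroup Y] [Module k Y] [Module B Y] [IsScalarTower k B Y]
    [Module.Finite B Y] [Nontrivial Y] :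
    IsTorsionless (A ⊗[k] B) (X ⊗[k] Y) ↔ IsTorsionless A X ∧ IsTorsionless B Y :=
  stmt7_general k A B X Y
end
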